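/- Let κ_2: Cop(2) → ℝ be a bivariate measure of concordance in Scarsini's sense, and for p ≥ 1 define κ_{2+p}(C) = (1/C(2+p,2)) ∑_{T ∈ {1,...,2+p}(p)} κ_2(C_T) for (2+p)-copulas C. Then the transition property holds with r_{1+p} = 2p/(2+p): for every (2+p)-copula C, κ_{2+p}(C) + κ_{2+p}(σ_1*(C)) = r_{1+p} κ_{1+p}(C_1). -/

import Mathlib

open MeasureTheory Filter

noncomputable section

/-- The unit cube `I^n ⊆ ℝ^n`. -/
def cube (n : ℕ) : Set (Fin n → ℝ) := Set.univ.pi fun _ => Set.Icc (0:ℝ) 1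

/-- The box `[0,x] = [0,x_1] × ⋯ × [0,x_n]`. -/
def box {n : ℕ} (x : Fin n → ℝ) : Set (Fin n → ℝ) := Set.univ.pi fun i => Set.Icc 0 (x i)

/-- `C` is an `n`-copula. -/
def IsCopula {n : ℕ} (C : (Fin n → ℝ) → ℝ) : Prop :=
  ∃ μ : Measure (Fin n → ℝ), IsProbabilityMeasure μ ∧
    (∀ x ∈ cube n, C x = (μ (box x)).toReal) ∧
    (∀ i : Fin n, μ.map (fun y => y i) = volume.restrict (Set.Icc (0:ℝ) 1))

/-- The action `τ*(C) = C ∘ τ` of a coordinate permutation. -/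
def permTrans {n : ℕ} (τ : Equiv.Perm (Fin n)) (C : (Fin n → ℝ) → ℝ) : (Fin n → ℝ) → ℝ :=
  fun x => C fun i => x (τ i)

/-- The action `σ_S*(C)(x) = μ_C(σ_S([0,x]))`, written out by inclusion–exclusion. -/
def reflTrans {n : ℕ} (S : Finset (Fin n)) (C : (Fin n → ℝ) → ℝ) : (Fin n → ℝ) → ℝ :=
  fun x => ∑ T ∈ S.powerset, (-1 : ℝ) ^ T.card *
    C (fun i => if i ∈ T then 1 - x i else if i ∈ S then 1 else x i)

/-- The proper bivariate marginal `C_T` of an `m`-copula `C`, for `T` with `card T = m - 2`: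
coordinates in `T` are set equal to `1`, and the two remaining coordinates (in increasing
order) receive the arguments `y 0` and `y 1`. -/
def biMarg {m : ℕ} (D : (Fin m → ℝ) → ℝ) (T : Finset (Fin m)) : (Fin 2 → ℝ) → ℝ :=
  fun y => D fun i => if i ∈ T then 1
    else if 0 < ((Tᶜ).filter (fun j => j < i)).card then y 1 else y 0

/-- The extension of a bivariate measure of concordance `κ_2` to dimension `m`:
`κ_m(C) = (1 / C(m,2)) ∑_{T ∈ {1,…,m}(m-2)} κ_2(C_T)` (that is, `(1/C(m,2)) 𝔅_2(C)`). -/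
def kExt (κ2 : ((Fin 2 → ℝ) → ℝ) → ℝ) (m : ℕ) (D : (Fin m → ℝ) → ℝ) : ℝ :=
  (1 / (m.choose 2 : ℝ)) *
    ∑ T ∈ (Finset.univ : Finset (Fin m)).powersetCard (m - 2), κ2 (biMarg D T)


/-!
Copulas are only pinned down on the unit cube, and continuity of `κ_2`, applied to a constant
sequence, shows that `κ_2` only sees those values.

For `T ∋ 1`, reflecting the first coordinate leaves the bivariate marginal `C_T` unchanged on the
cube: the term the reflection subtracts is `C` at a point with a zero coordinate. For `T ∌ 1`,
the first coordinate is the first free coordinate of `C_T`, so `σ_1*(C)_T = σ_1*(C_T)` and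
`κ_2` changes sign. Hence `𝔅_2(C) + 𝔅_2(σ_1*(C))` is twice the sum of `κ_2(C_T)` over `T ∋ 1`,
and these are exactly the bivariate marginals of `C_1`. The constant is
`2 · C(1+p,2) / C(2+p,2) = 2p/(2+p)`.
-/

open Finset hiding box
open Function

section Copula

variable {n : ℕ}

lemma mem_cube_iff {x : Fin n → ℝ} : x ∈ cube n ↔ ∀ i, x i ∈ Set.Icc (0 : ℝ) 1 :=
  Set.mem_univ_pi

lemma update_mem_cube {x : Fin n → ℝ} (hx : x ∈ cube n) (i : Fin n) {t : ℝ}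
    (ht : t ∈ Set.Icc (0 : ℝ) 1) : update x i t ∈ cube n :=
  (Set.update_mem_pi_iff_of_mem hx).2 fun _ => ht

lemma ae_mem_cube {μ : Measure (Fin n → ℝ)}
    (hμ : ∀ i : Fin n, μ.map (fun y => y i) = volume.restrict (Set.Icc (0 : ℝ) 1)) :
    ∀ᵐ w ∂μ, w ∈ cube n := by
  simp only [mem_cube_iff, ae_all_iff]
  intro i
  refine ae_of_ae_map (measurable_pi_apply i).aemeasurable ?_
  rw [hμ i]
  exact ae_restrict_mem measurableSet_Icc

lemma measurableSet_box (x : Fin n → ℝ) : MeasurableSet (box x) :=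
  MeasurableSet.univ_pi fun _ => measurableSet_Icc

namespace IsCopula

variable {C : (Fin n → ℝ) → ℝ}

lemma congr_cube (hC : IsCopula C) {A : (Fin n → ℝ) → ℝ} (h : ∀ x ∈ cube n, A x = C x) :
    IsCopula A := by
  obtain ⟨μ, hμ, hbox, hmarg⟩ := hC
  exact ⟨μ, hμ, fun x hx => (h x hx).trans (hbox x hx), hmarg⟩

lemma apply_eq_zero (hC : IsCopula C) {x : Fin n → ℝ} (hx : x ∈ cube n) {i : Fin n}
    (hi : x i = 0) : C x = 0 := by
  obtain ⟨μ, -, hbox, hmarg⟩ := hC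
  have hnull : μ ((fun y => y i) ⁻¹' {0}) = 0 := by
    rw [← Measure.map_apply (measurable_pi_apply i) (measurableSet_singleton 0), hmarg i,
      Measure.restrict_apply (measurableSet_singleton 0)]
    exact measure_mono_null Set.inter_subset_left Real.volume_singleton
  have hsub : box x ⊆ (fun y => y i) ⁻¹' {0} := fun w hw => by
    have hwi : w i ∈ Set.Icc 0 (x i) := hw i (Set.mem_univ i)
    rw [hi] at hwi
    exact le_antisymm hwi.2 hwi.1
  rw [hbox x hx, measure_mono_null hsub hnull, ENNReal.toReal_zero]

end IsCopula

end Copula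

section BiMarg

variable {n : ℕ}

def biMargPoint (T : Finset (Fin n)) (y : Fin 2 → ℝ) : Fin n → ℝ :=
  fun i => if i ∈ T then 1 else if 0 < ((Tᶜ).filter (fun j => j < i)).card then y 1 else y 0

lemma biMarg_apply (D : (Fin n → ℝ) → ℝ) (T : Finset (Fin n)) (y : Fin 2 → ℝ) :
    biMarg D T y = D (biMargPoint T y) := rfl

variable {T : Finset (Fin n)} {y : Fin 2 → ℝ} {i : Fin n}

lemma biMargPoint_of_mem (hi : i ∈ T) : biMargPoint T y i = 1 := if_pos hi

lemma biMargPoint_of_forall_le (hi : i ∉ T) (hmin : ∀ j ∉ T, i ≤ j) :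
    biMargPoint T y i = y 0 := by
  have hnone : (Tᶜ).filter (fun j => j < i) = ∅ :=
    filter_eq_empty_iff.2 fun j hj => not_lt.2 (hmin j (mem_compl.1 hj))
  simp [biMargPoint, hi, hnone]

lemma biMargPoint_of_lt {j : Fin n} (hi : i ∉ T) (hj : j ∉ T) (hji : j < i) :
    biMargPoint T y i = y 1 := by
  have hsome : 0 < ((Tᶜ).filter (fun j => j < i)).card :=
    card_pos.2 ⟨j, mem_filter.2 ⟨mem_compl.2 hj, hji⟩⟩
  simp [biMargPoint, hi, hsome]

lemma biMargPoint_mem_cube (hy : y ∈ cube 2) : biMargPoint T y ∈ cube n := by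
  rw [mem_cube_iff] at hy ⊢
  intro i
  unfold biMargPoint
  split_ifs
  exacts [⟨zero_le_one, le_rfl⟩, hy 1, hy 0]

lemma biMargPoint_of_compl_eq_pair {a b : Fin n} (hTc : Tᶜ = {a, b}) (hab : a < b) :
    biMargPoint T y a = y 0 ∧ biMargPoint T y b = y 1 := by
  have ha : a ∉ T := by simp [← mem_compl, hTc]
  have hb : b ∉ T := by simp [← mem_compl, hTc]
  refine ⟨biMargPoint_of_forall_le ha fun j hj => ?_, biMargPoint_of_lt hb ha hab⟩
  rcases (by simpa [hTc] using mem_compl.2 hj : j = a ∨ j = b) with rfl | rfl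
  exacts [le_rfl, hab.le]

lemma mem_box_biMargPoint_iff {a b : Fin n} (hTc : Tᶜ = {a, b}) (hab : a < b)
    {w : Fin n → ℝ} (hw : w ∈ cube n) :
    w ∈ box (biMargPoint T y) ↔ ![w a, w b] ∈ box y := by
  obtain ⟨hya, hyb⟩ := biMargPoint_of_compl_eq_pair (y := y) hTc hab
  simp only [box, Set.mem_univ_pi, Fin.forall_fin_two, Matrix.cons_val_zero,
    Matrix.cons_val_one]
  refine ⟨fun h => ⟨hya ▸ h a, hyb ▸ h b⟩, fun ⟨h0, h1⟩ i => ?_⟩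
  by_cases hi : i ∈ T
  · rw [biMargPoint_of_mem hi]
    exact mem_cube_iff.1 hw i
  · rcases (by simpa [hTc] using mem_compl.2 hi : i = a ∨ i = b) with rfl | rfl
    exacts [hya.symm ▸ h0, hyb.symm ▸ h1]

lemma IsCopula.biMarg {C : (Fin n → ℝ) → ℝ} (hC : IsCopula C) (hT : Tᶜ.card = 2) :
    IsCopula (biMarg C T) := by
  obtain ⟨a, b, hab, hTc⟩ := card_eq_two.1 hT
  wlog hlt : a < b generalizing a b
  · exact this b a hab.symm (by rw [hTc, pair_comm]) (hab.symm.lt_of_le (not_lt.1 hlt))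
  obtain ⟨μ, hμ, hbox, hmarg⟩ := hC
  let g : (Fin n → ℝ) → (Fin 2 → ℝ) := fun w => ![w a, w b]
  have hg : Measurable g := by fun_prop
  refine ⟨μ.map g, Measure.isProbabilityMeasure_map hg.aemeasurable, fun y hy => ?_,
    fun j => ?_⟩
  · rw [biMarg_apply, hbox _ (biMargPoint_mem_cube hy),
      Measure.map_apply hg (measurableSet_box y)]
    congr 1
    refine measure_congr (eventuallyEq_set.2 ?_)
    filter_upwards [ae_mem_cube hmarg] with w hw
    exact mem_box_biMargPoint_iff hTc hlt hw
  · rw [Measure.map_map (measurable_pi_apply j) hg]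
    fin_cases j
    exacts [hmarg a, hmarg b]

end BiMarg

section Reflection

variable {n : ℕ}

lemma reflTrans_singleton (i : Fin n) (C : (Fin n → ℝ) → ℝ) (x : Fin n → ℝ) :
    reflTrans {i} C x = C (update x i 1) - C (update x i (1 - x i)) := by
  have hpow : ({i} : Finset (Fin n)).powerset = {∅, {i}} := by
    ext; simp [subset_singleton_iff]
  simp only [reflTrans, hpow]
  have hupd : ∀ v : ℝ, update x i v = fun j => if j = i then v else x j := fun v =>
    funext fun j => update_apply x i v j
  rw [sum_pair (Finset.empty_ne_singleton i), hupd, hupd]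
  simp only [card_empty, card_singleton, notMem_empty, mem_singleton, if_false]
  congr 1 <;> simp +contextual [sub_eq_add_neg]

lemma biMarg_reflTrans_of_mem {C : (Fin n → ℝ) → ℝ} (hC : IsCopula C) {i : Fin n}
    {T : Finset (Fin n)} (hi : i ∈ T) {y : Fin 2 → ℝ} (hy : y ∈ cube 2) :
    biMarg (reflTrans {i} C) T y = biMarg C T y := by
  have hxi : biMargPoint T y i = 1 := biMargPoint_of_mem hi
  have hx : biMargPoint T y ∈ cube n := biMargPoint_mem_cube hy
  rw [biMarg_apply, biMarg_apply, reflTrans_singleton, (update_eq_self_iff).2 hxi.symm, hxi,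
    sub_self, hC.apply_eq_zero (update_mem_cube hx i ⟨le_rfl, zero_le_one⟩) (update_self ..),
    sub_zero]

lemma biMargPoint_update_zero {T : Finset (Fin n)} {i : Fin n} (hi : i ∉ T)
    (hmin : ∀ j, i ≤ j) (y : Fin 2 → ℝ) (c : ℝ) :
    biMargPoint T (update y 0 c) = update (biMargPoint T y) i c := by
  ext j
  by_cases hj : j ∈ T
  · rw [biMargPoint_of_mem hj, update_of_ne (ne_of_mem_of_not_mem hj hi), biMargPoint_of_mem hj]
  rcases (hmin j).eq_or_lt with rfl | hlt
  · rw [update_self, biMargPoint_of_forall_le hj fun k _ => hmin k, update_self]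
  · rw [update_of_ne hlt.ne', biMargPoint_of_lt hj hi hlt, biMargPoint_of_lt hj hi hlt,
      update_of_ne Fin.zero_ne_one.symm]

lemma biMarg_reflTrans_of_not_mem (C : (Fin n → ℝ) → ℝ) {i : Fin n} (hmin : ∀ j, i ≤ j)
    {T : Finset (Fin n)} (hi : i ∉ T) :
    biMarg (reflTrans {i} C) T = reflTrans {0} (biMarg C T) := by
  ext y
  have hyi : biMargPoint T y i = y 0 := biMargPoint_of_forall_le hi fun j _ => hmin j
  rw [biMarg_apply, reflTrans_singleton, reflTrans_singleton, biMarg_apply, biMarg_apply,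
    biMargPoint_update_zero hi hmin, biMargPoint_update_zero hi hmin, hyi]

end Reflection

section Concordance

variable (κ2 : ((Fin 2 → ℝ) → ℝ) → ℝ)

lemma eq_of_eqOn_cube_of_continuous
    (hcont : ∀ (C : (Fin 2 → ℝ) → ℝ) (Cm : ℕ → (Fin 2 → ℝ) → ℝ),
      IsCopula C → (∀ k, IsCopula (Cm k)) →
      TendstoUniformlyOn Cm C atTop (cube 2) →
      Tendsto (fun k => κ2 (Cm k)) atTop (nhds (κ2 C)))
    {A B : (Fin 2 → ℝ) → ℝ} (hB : IsCopula B) (h : ∀ x ∈ cube 2, A x = B x) :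
    κ2 A = κ2 B := by
  have hconst : TendstoUniformlyOn (fun _ : ℕ => A) B atTop (cube 2) := fun u hu =>
    Eventually.of_forall fun _ x hx => h x hx ▸ refl_mem_uniformity hu
  exact tendsto_nhds_unique tendsto_const_nhds
    (hcont B _ hB (fun _ => hB.congr_cube h) hconst)

lemma card_compl_eq_two {n : ℕ} (hn : 2 ≤ n) {T : Finset (Fin n)}
    (hT : T ∈ (univ : Finset (Fin n)).powersetCard (n - 2)) : Tᶜ.card = 2 := by
  rw [card_compl, Fintype.card_fin, (mem_powersetCard.1 hT).2]
  omega

lemma sum_kappa_biMarg_add_reflTrans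
    (hcongr : ∀ A B : (Fin 2 → ℝ) → ℝ, IsCopula B → (∀ x ∈ cube 2, A x = B x) →
      κ2 A = κ2 B)
    (hsign : ∀ C : (Fin 2 → ℝ) → ℝ, IsCopula C → κ2 (reflTrans {0} C) = -κ2 C)
    {n : ℕ} (hn : 2 ≤ n) {C : (Fin n → ℝ) → ℝ} (hC : IsCopula C) {i : Fin n}
    (hmin : ∀ j, i ≤ j) :
    ∑ T ∈ univ.powersetCard (n - 2), κ2 (biMarg C T) +
        ∑ T ∈ univ.powersetCard (n - 2), κ2 (biMarg (reflTrans {i} C) T) =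
      2 * ∑ T ∈ (univ.powersetCard (n - 2)).filter (i ∈ ·), κ2 (biMarg C T) := by
  rw [← sum_add_distrib, mul_sum, sum_filter]
  refine sum_congr rfl fun T hT => ?_
  have hCT : IsCopula (biMarg C T) := hC.biMarg (card_compl_eq_two hn hT)
  split_ifs with hi
  · rw [hcongr _ _ hCT fun y hy => biMarg_reflTrans_of_mem hC hi hy]
    ring
  · rw [biMarg_reflTrans_of_not_mem C hmin hi, hsign _ hCT]
    ring

end Concordance

section FirstCoordinate

variable {p : ℕ}

def tailEmb (p : ℕ) : Fin (1 + p) ↪ Fin (2 + p) :=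
  ⟨fun j => ⟨j + 1, by omega⟩, fun j k h => Fin.ext (by simpa using congrArg Fin.val h)⟩

def fixFirst (C : (Fin (2 + p) → ℝ) → ℝ) : (Fin (1 + p) → ℝ) → ℝ :=
  fun y => C fun i =>
    if h : (i : ℕ) = 0 then 1 else y ⟨(i : ℕ) - 1, by have := i.isLt; omega⟩

@[simp]
lemma val_tailEmb (j : Fin (1 + p)) : (tailEmb p j : ℕ) = j + 1 := rfl

@[simp]
lemma tailEmb_ne_zero (j : Fin (1 + p)) : tailEmb p j ≠ 0 := fun h => by
  simpa using congrArg Fin.val h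

@[simp]
lemma tailEmb_lt_tailEmb {j k : Fin (1 + p)} : tailEmb p j < tailEmb p k ↔ j < k := by
  rw [Fin.lt_def, Fin.lt_def, val_tailEmb, val_tailEmb]
  omega

lemma eq_zero_or_exists_tailEmb (i : Fin (2 + p)) : i = 0 ∨ ∃ j, tailEmb p j = i := by
  rcases Nat.eq_zero_or_eq_succ_pred (i : ℕ) with hi | hi
  · exact .inl (Fin.ext hi)
  · exact .inr ⟨⟨(i : ℕ) - 1, by omega⟩, Fin.ext (by simp only [val_tailEmb]; omega)⟩

lemma tailEmb_mem_insert_zero_map {T : Finset (Fin (1 + p))} {j : Fin (1 + p)} :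
    tailEmb p j ∈ insert 0 (T.map (tailEmb p)) ↔ j ∈ T := by
  simp

lemma biMargPoint_insert_zero_map_tailEmb (T : Finset (Fin (1 + p))) (y : Fin 2 → ℝ)
    (j : Fin (1 + p)) :
    biMargPoint (insert 0 (T.map (tailEmb p))) y (tailEmb p j) = biMargPoint T y j := by
  have hfree : ((insert 0 (T.map (tailEmb p)))ᶜ).filter (· < tailEmb p j) =
      ((Tᶜ).filter (· < j)).map (tailEmb p) := by
    ext i
    rcases eq_zero_or_exists_tailEmb i with rfl | ⟨k, rfl⟩ <;> simp
  simp only [biMargPoint, tailEmb_mem_insert_zero_map, hfree, card_map]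

lemma biMarg_insert_zero_map_tailEmb (C : (Fin (2 + p) → ℝ) → ℝ)
    (T : Finset (Fin (1 + p))) :
    biMarg C (insert 0 (T.map (tailEmb p))) = biMarg (fixFirst C) T := by
  ext y
  rw [biMarg_apply, biMarg_apply, fixFirst]
  congr 1
  ext i
  rcases eq_zero_or_exists_tailEmb i with rfl | ⟨j, rfl⟩
  · simp [biMargPoint_of_mem]
  · rw [biMargPoint_insert_zero_map_tailEmb, dif_neg (by simp)]
    rfl

lemma sum_filter_zero_mem_powersetCard (hp : 1 ≤ p) {M : Type*} [AddCommMonoid M]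
    (f : Finset (Fin (2 + p)) → M) :
    ∑ T ∈ (univ.powersetCard (2 + p - 2)).filter (0 ∈ ·), f T =
      ∑ T ∈ univ.powersetCard (1 + p - 2), f (insert 0 (T.map (tailEmb p))) := by
  have hinsert_map_preimage : ∀ T : Finset (Fin (2 + p)), 0 ∈ T →
      insert 0 ((T.preimage (tailEmb p) (tailEmb p).injective.injOn).map (tailEmb p)) = T := by
    intro T h0
    ext i
    rcases eq_zero_or_exists_tailEmb i with rfl | ⟨j, rfl⟩ <;> simp [h0]
  refine (sum_nbij' (fun T : Finset (Fin (1 + p)) => insert 0 (T.map (tailEmb p)))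
    (fun T : Finset (Fin (2 + p)) => T.preimage (tailEmb p) (tailEmb p).injective.injOn)
    ?_ ?_ ?_ ?_ fun _ _ => rfl).symm
  · intro T hT
    refine mem_filter.2 ⟨mem_powersetCard.2 ⟨subset_univ _, ?_⟩, mem_insert_self _ _⟩
    rw [card_insert_of_notMem (by simp), card_map, (mem_powersetCard.1 hT).2]
    omega
  · intro T hT
    obtain ⟨hT, h0⟩ := mem_filter.1 hT
    refine mem_powersetCard.2 ⟨subset_univ _, ?_⟩
    have hcard := congrArg card (hinsert_map_preimage T h0)
    rw [card_insert_of_notMem (by simp), card_map, (mem_powersetCard.1 hT).2] at hcard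
    omega
  · intro T _
    ext j
    simp
  · intro T hT
    exact hinsert_map_preimage T (mem_filter.1 hT).2

end FirstCoordinate

/-- Theorem 4.3 of Taylor (transition-property part): if `κ_2` is a bivariate measure of
concordance in Scarsini's sense and `κ_{2+p}` is defined by `(1/C(2+p,2)) 𝔅_2(C)`, then the
transition property holds with `r_{1+p} = 2p/(2+p)`:
`κ_{2+p}(C) + κ_{2+p}(σ_1*(C)) = r_{1+p} κ_{1+p}(C_1)`. -/
theorem stmt19 (κ2 : ((Fin 2 → ℝ) → ℝ) → ℝ)
    (hcont : ∀ (C : (Fin 2 → ℝ) → ℝ) (Cm : ℕ → (Fin 2 → ℝ) → ℝ),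
      IsCopula C → (∀ k, IsCopula (Cm k)) →
      TendstoUniformlyOn Cm C atTop (cube 2) →
      Tendsto (fun k => κ2 (Cm k)) atTop (nhds (κ2 C)))
    (hsign : ∀ C : (Fin 2 → ℝ) → ℝ, IsCopula C →
      κ2 (reflTrans {0} C) = -κ2 C ∧ κ2 (reflTrans {1} C) = -κ2 C)
    (p : ℕ) (hp : 1 ≤ p) (C : (Fin (2 + p) → ℝ) → ℝ) (hC : IsCopula C) :
    kExt κ2 (2 + p) C + kExt κ2 (2 + p) (reflTrans {(⟨0, by omega⟩ : Fin (2 + p))} C) =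
      (2 * (p : ℝ) / (2 + (p : ℝ))) * kExt κ2 (1 + p)
        (fun y => C fun i : Fin (2 + p) =>
          if h : (i : ℕ) = 0 then 1 else y ⟨(i : ℕ) - 1, by have := i.isLt; omega⟩) := by
  have hsum := sum_kappa_biMarg_add_reflTrans κ2
    (fun _ _ => eq_of_eqOn_cube_of_continuous κ2 hcont) (fun C hC => (hsign C hC).1)
    (by omega) hC (i := 0) Fin.zero_le
  rw [sum_filter_zero_mem_powersetCard hp] at hsum
  simp only [biMarg_insert_zero_map_tailEmb] at hsum
  change kExt κ2 (2 + p) C + kExt κ2 (2 + p) (reflTrans {0} C) =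
    _ * kExt κ2 (1 + p) (fixFirst C)
  rw [kExt, kExt, kExt, ← mul_add, hsum, Nat.cast_choose_two, Nat.cast_choose_two]
  have hp0 : (p : ℝ) ≠ 0 := Nat.cast_ne_zero.2 (by omega)
  push_cast
  rw [show (2 + p : ℝ) - 1 = 1 + p by ring, add_sub_cancel_left]
  field_simp

end
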